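/- Let G and H be graphs each with at least two vertices, with G connected. If γ(H) ≥ 3, then the lexicographic product G[H] is not well-dominated. -/

import Mathlib

open SimpleGraph Finset

/-- Open neighborhood of a set: vertices having a neighbor in `S`. -/
def nbhd {V : Type*} (G : SimpleGraph V) (S : Set V) : Set V := {v | ∃ u ∈ S, G.Adj u v}

/-- Closed neighborhood of a vertex. -/
def closedNbhd {V : Type*} (G : SimpleGraph V) (v : V) : Set V := insert v (G.neighborSet v)

/-- `S` dominates vertex `v`. -/
def Dominates {V : Type*} (G : SimpleGraph V) (S : Set V) (v : V) : Prop :=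
  v ∈ S ∨ ∃ u ∈ S, G.Adj u v

/-- `D` is a dominating set of `G`. -/
def IsDomSet {V : Type*} (G : SimpleGraph V) (D : Set V) : Prop := ∀ v, Dominates G D v

/-- `D` is a minimal dominating set of `G`. -/
def IsMinDomSet {V : Type*} (G : SimpleGraph V) (D : Set V) : Prop :=
  IsDomSet G D ∧ ∀ D' ⊂ D, ¬ IsDomSet G D'

/-- `D` is an irreducible dominating set of `G`. -/
def IsIrredDomSet {V : Type*} (G : SimpleGraph V) (D : Set V) : Prop :=
  IsDomSet G D ∧ ¬ ∃ u ∈ D, IsDomSet G (D \ {u}) ∧ nbhd G D = nbhd G (D \ {u})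

/-- Lexicographic product of two simple graphs. -/
def lexProd {V W : Type*} (G : SimpleGraph V) (H : SimpleGraph W) : SimpleGraph (V × W) where
  Adj p q := G.Adj p.1 q.1 ∨ (p.1 = q.1 ∧ H.Adj p.2 q.2)
  symm := by
    constructor
    rintro p q (h | ⟨e, h⟩)
    · exact Or.inl h.symm
    · exact Or.inr ⟨e.symm, h.symm⟩
  loopless := by
    constructor
    rintro p (h | ⟨_, h⟩)
    · exact G.loopless.irrefl _ h
    · exact H.loopless.irrefl _ h

/-- Projection of `D ⊆ V(G) × V(H)` to `G`. -/
def projG {V W : Type*} (D : Set (V × W)) : Set V := {x | ∃ y, (x, y) ∈ D}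

/-- Fiber of `D ⊆ V(G) × V(H)` over `x ∈ V(G)`. -/
def projH {V W : Type*} (D : Set (V × W)) (x : V) : Set W := {y | (x, y) ∈ D}

/-- The domination number. -/
noncomputable def domNum {V : Type*} [Fintype V] (G : SimpleGraph V) : ℕ :=
  sInf {n | ∃ D : Finset V, IsDomSet G ↑D ∧ D.card = n}

/-- A graph is well-dominated if all its minimal dominating sets have the same size. -/
def WellDominated (V : Type*) [Fintype V] (G : SimpleGraph V) : Prop :=
  ∀ D₁ D₂ : Finset V, IsMinDomSet G ↑D₁ → IsMinDomSet G ↑D₂ → D₁.card = D₂.card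

/-!
In `G[H]` with `G` connected and nontrivial, every vertex `(x, y)` is dominated by any
`(u, y₀)` with `u` a `G`-neighbour of `x`. So if `T` is a minimal total dominating set of `G`
and `y₀` does not dominate `H` alone, `T × {y₀}` is a minimal dominating set of size
`|T| ≤ 2γ(G)`. On the other hand, for a maximal independent set `I` of `G` and a minimal
dominating set `B` of `H`, the set `I × B` is minimal dominating of size
`|I| |B| ≥ 3|I| ≥ 3γ(G)`, since `γ(H) ≥ 3`.
-/

section

variable {V W : Type*}

def IsTotalDomSet (G : SimpleGraph V) (S : Set V) : Prop := ∀ v, ∃ u ∈ S, G.Adj u v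

lemma exists_subset_forall_not_diff_singleton {α : Type*} (P : Set α → Prop) (s : Finset α)
    (hs : P s) : ∃ t ⊆ s, P t ∧ ∀ a ∈ t, ¬ P (↑t \ {a}) := by
  classical
  obtain ⟨t, hts, hmin⟩ := exists_minimal_le_of_wellFoundedLT (fun t : Finset α => P t) s hs
  refine ⟨t, hts, hmin.prop, fun a ha => ?_⟩
  rw [← Finset.coe_erase]
  exact hmin.not_prop_of_lt (Finset.erase_ssubset ha)

section Domination

variable {G : SimpleGraph V}

lemma IsDomSet.mono {D D' : Set V} (hD : IsDomSet G D) (h : D ⊆ D') : IsDomSet G D' := by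
  intro v
  rcases hD v with hv | ⟨u, hu, huv⟩
  · exact Or.inl (h hv)
  · exact Or.inr ⟨u, h hu, huv⟩

lemma isMinDomSet_of_forall_not_isDomSet_diff {D : Set V} (hD : IsDomSet G D)
    (h : ∀ p ∈ D, ¬ IsDomSet G (D \ {p})) : IsMinDomSet G D := by
  refine ⟨hD, fun D' hD' hdom => ?_⟩
  obtain ⟨p, hpD, hpD'⟩ := Set.exists_of_ssubset hD'
  exact h p hpD (hdom.mono fun x hx => ⟨hD'.1 hx, by rintro rfl; exact hpD' hx⟩)

lemma IsMinDomSet.not_isDomSet_diff {D : Set V} (hD : IsMinDomSet G D) {p : V} (hp : p ∈ D) :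
    ¬ IsDomSet G (D \ {p}) :=
  hD.2 _ (Set.sdiff_singleton_ssubset.2 hp)

lemma isDomSet_of_maximal_isIndepSet {I : Set V} (hI : Maximal G.IsIndepSet I) :
    IsDomSet G I := by
  intro v
  by_contra hv
  obtain ⟨hvI, hnadj⟩ := not_or.1 hv
  simp only [not_exists, not_and] at hnadj
  have hins : G.IsIndepSet (insert v I) :=
    hI.prop.insert fun u hu _ => ⟨fun h => hnadj u hu h.symm, hnadj u hu⟩
  exact hvI (hI.2 hins (Set.subset_insert v I) (Set.mem_insert v I))

lemma IsDomSet.exists_isTotalDomSet_card_le (hG : ∀ v, ∃ u, G.Adj u v) {D : Finset V}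
    (hD : IsDomSet G D) : ∃ T : Finset V, IsTotalDomSet G T ∧ #T ≤ 2 * #D := by
  classical
  choose f hf using hG
  refine ⟨D ∪ D.image f, fun v => ?_, ?_⟩
  · rcases hD v with hv | ⟨u, hu, huv⟩
    · exact ⟨f v, mem_union_right _ (mem_image_of_mem f hv), hf v⟩
    · exact ⟨u, mem_union_left _ hu, huv⟩
  · calc #(D ∪ D.image f) ≤ #D + #(D.image f) := card_union_le _ _
      _ ≤ 2 * #D := by have := card_image_le (s := D) (f := f); omega

lemma isDomSet_univ : IsDomSet G Set.univ := fun _ => Or.inl trivial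

variable [Fintype V]

lemma domNum_le_card {D : Finset V} (hD : IsDomSet G D) : domNum G ≤ #D :=
  Nat.sInf_le ⟨D, hD, rfl⟩

variable (G) in
lemma exists_isDomSet_card_eq_domNum : ∃ D : Finset V, IsDomSet G D ∧ #D = domNum G :=
  Nat.sInf_mem (s := {n | ∃ D : Finset V, IsDomSet G D ∧ #D = n})
    ⟨_, Finset.univ, by simpa using isDomSet_univ, rfl⟩

variable (G) in
lemma exists_isMinDomSet : ∃ D : Finset V, IsMinDomSet G D := by
  obtain ⟨D, -, hD, hDmin⟩ := exists_subset_forall_not_diff_singleton (IsDomSet G) Finset.univ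
    (by simpa using isDomSet_univ)
  exact ⟨D, isMinDomSet_of_forall_not_isDomSet_diff hD hDmin⟩

lemma exists_not_dominates_singleton (h : 1 < domNum G) : ∃ y₀ y₁, ¬ Dominates G {y₀} y₁ := by
  obtain ⟨y₀⟩ : Nonempty V := by
    by_contra hV
    have := domNum_le_card (G := G) (D := ∅) fun v => (hV ⟨v⟩).elim
    simp at this
    omega
  by_contra! hdom
  have := domNum_le_card (G := G) (D := {y₀}) (by rw [coe_singleton]; exact hdom y₀)
  simp at this
  omega

end Domination

section LexProd

variable {G : SimpleGraph V} {H : SimpleGraph W}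

lemma isMinDomSet_lexProd_prod_singleton {T : Set V} (hT : IsTotalDomSet G T)
    (hTmin : ∀ u ∈ T, ¬ IsTotalDomSet G (T \ {u})) {y₀ y₁ : W} (hy : ¬ Dominates H {y₀} y₁) :
    IsMinDomSet (lexProd G H) (T ×ˢ {y₀}) := by
  refine isMinDomSet_of_forall_not_isDomSet_diff (fun ⟨x, y⟩ => ?_) ?_
  · obtain ⟨u, hu, hux⟩ := hT x
    exact Or.inr ⟨(u, y₀), ⟨hu, rfl⟩, Or.inl hux⟩
  rintro ⟨u, y⟩ ⟨hu, hy₀⟩ hdom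
  obtain rfl : y₀ = y := hy₀.symm
  obtain ⟨w, hw⟩ : ∃ w, ∀ v ∈ T \ {u}, ¬ G.Adj v w := by
    simpa [IsTotalDomSet] using hTmin u hu
  simp only [Dominates, Set.mem_singleton_iff, exists_eq_left, not_or] at hy
  rcases hdom (w, y₁) with ⟨⟨-, hy₁ : y₁ = y₀⟩, -⟩ | ⟨⟨v, c⟩, ⟨⟨hv, rfl⟩, hvu⟩, hadj⟩
  · exact hy.1 hy₁
  rcases hadj with hvw | ⟨-, hy₀y₁⟩
  · exact hw v ⟨hv, fun h => hvu (by simp_all)⟩ hvw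
  · exact hy.2 hy₀y₁

lemma isMinDomSet_lexProd_prod {I : Set V} {B : Set W} (hI : IsDomSet G I)
    (hIind : G.IsIndepSet I) (hB : IsMinDomSet H B) : IsMinDomSet (lexProd G H) (I ×ˢ B) := by
  refine isMinDomSet_of_forall_not_isDomSet_diff (fun ⟨x, y⟩ => ?_) ?_
  · have hBy := hB.1 y
    obtain ⟨b, hb⟩ : ∃ b, b ∈ B := by
      rcases hBy with hy | ⟨b, hb, -⟩
      exacts [⟨y, hy⟩, ⟨b, hb⟩]
    rcases hI x with hx | ⟨u, hu, hux⟩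
    · rcases hBy with hy | ⟨c, hc, hcy⟩
      · exact Or.inl ⟨hx, hy⟩
      · exact Or.inr ⟨(x, c), ⟨hx, hc⟩, Or.inr ⟨rfl, hcy⟩⟩
    · exact Or.inr ⟨(u, b), ⟨hu, hb⟩, Or.inl hux⟩
  rintro ⟨u, b⟩ ⟨hu, hb⟩ hdom
  obtain ⟨w, hwB, hw⟩ : ∃ w, w ∉ B \ {b} ∧ ∀ c ∈ B \ {b}, ¬ H.Adj c w := by
    simpa [IsDomSet, Dominates] using hB.not_isDomSet_diff hb
  rcases hdom (u, w) with ⟨⟨-, hw'⟩, hwb⟩ | ⟨⟨v, c⟩, ⟨⟨hv, hc⟩, hvc⟩, hadj⟩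
  · exact hwB ⟨hw', fun h => hwb (by simpa using h)⟩
  rcases hadj with hvu | ⟨rfl, hcw⟩
  · exact hIind hv hu (G.ne_of_adj hvu) hvu
  · exact hw c ⟨hc, fun h => hvc (by simpa using h)⟩ hcw

end LexProd

end

theorem stmt18_general {V W : Type*} [Fintype V] [Fintype W]
    (G : SimpleGraph V) (H : SimpleGraph W)
    (hVcard : 2 ≤ Fintype.card V)
    (hGconn : G.Connected)
    (hHγ : 3 ≤ domNum H) :
    ¬ WellDominated (V × W) (lexProd G H) := by
  have : Nontrivial V := Fintype.one_lt_card_iff_nontrivial.1 hVcard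
  have hG : ∀ v, ∃ u, G.Adj u v := fun v =>
    (hGconn.preconnected.exists_adj_of_nontrivial v).imp fun _ h => h.symm
  obtain ⟨y₀, y₁, hy⟩ := exists_not_dominates_singleton (G := H) (by omega)
  obtain ⟨D, hD, hDcard⟩ := exists_isDomSet_card_eq_domNum G
  obtain ⟨T₀, hT₀, hT₀card⟩ := hD.exists_isTotalDomSet_card_le hG
  obtain ⟨T, hTT₀, hT, hTmin⟩ := exists_subset_forall_not_diff_singleton _ T₀ hT₀
  obtain ⟨I, hImax⟩ := G.maximumIndepSet_exists
  have hI := isDomSet_of_maximal_isIndepSet (hImax.isMaximalIndepSet I)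
  obtain ⟨B, hB⟩ := exists_isMinDomSet H
  have hInonempty : I.Nonempty := by
    obtain ⟨v⟩ := hGconn.nonempty
    rcases hI v with hv | ⟨u, hu, -⟩
    exacts [⟨v, hv⟩, ⟨u, hu⟩]
  intro hWD
  have hcard := hWD (T ×ˢ {y₀}) (I ×ˢ B)
    (by rw [coe_product, coe_singleton]; exact isMinDomSet_lexProd_prod_singleton hT hTmin hy)
    (by rw [coe_product]; exact isMinDomSet_lexProd_prod hI hImax.isIndepSet hB)
  have hIpos := hInonempty.card_pos
  have hγG := domNum_le_card hI
  have hγH := domNum_le_card hB.1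
  have hTcard := card_le_card hTT₀
  rw [card_product, card_product, card_singleton, mul_one] at hcard
  nlinarith

theorem stmt18 {V W : Type*} [Fintype V] [Fintype W]
    (G : SimpleGraph V) (H : SimpleGraph W)
    (hVcard : 2 ≤ Fintype.card V) (hWcard : 2 ≤ Fintype.card W)
    (hGconn : G.Connected)
    (hHγ : 3 ≤ domNum H) :
    ¬ WellDominated (V × W) (lexProd G H) :=
  stmt18_general G H hVcard hGconn hHγ
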